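/- arXiv:1512.05182 — 5 statements merged into one kernel-verified Lean document; each statement's English description precedes it below -/
import Mathlib

section
/- Let G be a connected finite multigraph and f : V(G) → ℤ⁺. Suppose some vertex subset S satisfies o(G − S) ≥ f(S) + 1. Color each end of each edge red if its incident vertex lies in S, and green otherwise. Then G has no spanning subgraph F with Φ_F(v) ∈ J_f*(v) for all vertices v. -/
/-- A finite multigraph on vertex type `V` with edge type `E`: each edge `e` assigns to
each vertex the number of ends of `e` at that vertex (two ends in total, so a loop has
both ends at one vertex, and a non-loop edge has one end at each of two vertices). -/
structure Multigraph (V E : Type*) [Fintype V] where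
  inc : E → V → ℕ
  degSum : ∀ e, ∑ v, inc e v = 2

namespace Multigraph

variable {V E : Type*} [Fintype V]

/-- A 2-end-coloring of a multigraph, encoded by weights: each red end contributes `+1`
and each green end `-1` at its incident vertex, so a red loop gives `+2`, a green loop
`-2` (both ends of a loop automatically receive the same color in this encoding),
and a non-loop edge gives `±1` at each of its two endpoints. -/
def IsColoring (M : Multigraph V E) (w : E → V → ℤ) : Prop :=
  ∀ e v, (w e v).natAbs = M.inc e v

/-- Two vertices of a multigraph are adjacent if some (non-loop) edge joins them. -/
def graph (M : Multigraph V E) : SimpleGraph V where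
  Adj u v := u ≠ v ∧ ∃ e, 0 < M.inc e u ∧ 0 < M.inc e v
  symm := ⟨by rintro u v ⟨h, e, h1, h2⟩; exact ⟨h.symm, e, h2, h1⟩⟩
  loopless := ⟨by rintro v ⟨h, -⟩; exact h rfl⟩

/-- The number of odd-order connected components of `G - S`. -/
noncomputable def oddComp (M : Multigraph V E) (S : Set V) : ℕ :=
  Nat.card {c : (M.graph.induce Sᶜ).ConnectedComponent // Odd (Nat.card c.supp)}

/-- The colored degree `Φ_F(v)` of a vertex `v` in the subgraph determined by the
edge subset `F`, under the 2-end-coloring `w`. -/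
def cdeg (w : E → V → ℤ) (F : Finset E) (v : V) : ℤ := ∑ e ∈ F, w e v

end Multigraph

/-- `J_f*(v)`: all negative odd integers, together with all positive odd integers at
most `f v`, and also `f v` itself when `f v` is even. -/
def Jstar {V : Type*} (f : V → ℕ) (v : V) : Set ℤ :=
  {k | (Odd k ∧ k < 0) ∨ (Odd k ∧ 0 < k ∧ k ≤ (f v : ℤ)) ∨ (Even (f v) ∧ k = (f v : ℤ))}

/-! With ends in `S` red and all others green, `Φ_F(v) = deg_F v` on `S` and `-deg_F v` off `S`.
Membership in `J_f*` therefore forces `deg_F v ≤ f v` on `S` and, as `f v > 0` rules out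
`Φ_F(v) = 0`, `deg_F v` odd off `S`. An odd component `C` of `G - S` then has odd total
`F`-degree, so some edge of `F` has exactly one end in `C`, and its other end lies in `S`.
Such an edge determines `C`, hence `o(G - S) ≤ ∑_{v ∈ S} deg_F v ≤ f(S)`. -/

namespace Multigraph

variable {V E : Type*} [Fintype V]

def deg (M : Multigraph V E) (F : Finset E) (v : V) : ℕ := ∑ e ∈ F, M.inc e v

section Coloring

variable {M : Multigraph V E} {w : E → V → ℤ} {S : Finset V}

theorem weight_eq_of_mem (hw : M.IsColoring w)
    (hcol : ∀ e v, 0 < M.inc e v → ((v ∈ S → 0 < w e v) ∧ (v ∉ S → w e v < 0)))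
    {e : E} {v : V} (hv : v ∈ S) : w e v = M.inc e v := by
  have := hw e v
  rcases (M.inc e v).eq_zero_or_pos with h | h
  · omega
  · have := (hcol e v h).1 hv
    omega

theorem weight_eq_of_notMem (hw : M.IsColoring w)
    (hcol : ∀ e v, 0 < M.inc e v → ((v ∈ S → 0 < w e v) ∧ (v ∉ S → w e v < 0)))
    {e : E} {v : V} (hv : v ∉ S) : w e v = -M.inc e v := by
  have := hw e v
  rcases (M.inc e v).eq_zero_or_pos with h | h
  · omega
  · have := (hcol e v h).2 hv
    omega

theorem cdeg_eq_deg_of_mem (hw : M.IsColoring w)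
    (hcol : ∀ e v, 0 < M.inc e v → ((v ∈ S → 0 < w e v) ∧ (v ∉ S → w e v < 0)))
    (F : Finset E) {v : V} (hv : v ∈ S) : cdeg w F v = M.deg F v := by
  rw [cdeg, deg, Nat.cast_sum]
  exact Finset.sum_congr rfl fun e _ => weight_eq_of_mem hw hcol hv

theorem cdeg_eq_neg_deg_of_notMem (hw : M.IsColoring w)
    (hcol : ∀ e v, 0 < M.inc e v → ((v ∈ S → 0 < w e v) ∧ (v ∉ S → w e v < 0)))
    (F : Finset E) {v : V} (hv : v ∉ S) : cdeg w F v = -M.deg F v := by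
  rw [cdeg, deg, Nat.cast_sum, ← Finset.sum_neg_distrib]
  exact Finset.sum_congr rfl fun e _ => weight_eq_of_notMem hw hcol hv

end Coloring

variable (M : Multigraph V E)

theorem exists_odd_sum_inc_of_odd_sum_deg {F : Finset E} {T : Finset V}
    (h : Odd (∑ v ∈ T, M.deg F v)) : ∃ e ∈ F, Odd (∑ v ∈ T, M.inc e v) := by
  by_contra! hne
  simp only [deg] at h
  rw [Finset.sum_comm] at h
  exact Nat.not_even_iff_odd.2 h <|
    Finset.even_sum _ fun e he => Nat.not_odd_iff_even.1 (hne e he)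

/-- An odd number of ends in `T` means exactly one; the other end cannot lie outside `S ∪ T`
because `T` is closed under adjacency in `G - S`. -/
theorem sum_inc_eq_one_of_odd_sum_inc {S T : Finset V} (hTS : Disjoint T S)
    (hT : ∀ u ∉ S, ∀ v ∈ T, M.graph.Adj u v → u ∈ T) {e : E}
    (he : Odd (∑ v ∈ T, M.inc e v)) : ∑ v ∈ S, M.inc e v = 1 := by
  classical
  have hsplit : ∑ v ∈ S, M.inc e v + ∑ v ∈ T, M.inc e v + ∑ v ∈ (S ∪ T)ᶜ, M.inc e v = 2 := by
    rw [← Finset.sum_union hTS.symm, Finset.sum_add_sum_compl, M.degSum]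
  obtain ⟨k, hk⟩ := he
  by_contra hne
  obtain ⟨u, hu, hu0⟩ := Finset.exists_ne_zero_of_sum_ne_zero (s := (S ∪ T)ᶜ) (f := M.inc e)
    (by omega)
  obtain ⟨v, hv, hv0⟩ := Finset.exists_ne_zero_of_sum_ne_zero (s := T) (f := M.inc e) (by omega)
  simp only [Finset.mem_compl, Finset.mem_union, not_or] at hu
  exact hu.2 (hT u hu.1 v hv ⟨fun h => hu.2 (h ▸ hv), e, by omega, by omega⟩)

theorem eq_of_sum_inc_eq_one_of_inc_pos {S : Finset V} {e : E} (he : ∑ v ∈ S, M.inc e v = 1)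
    {u v : V} (hu : u ∉ S) (hv : v ∉ S) (hu0 : 0 < M.inc e u) (hv0 : 0 < M.inc e v) :
    u = v := by
  classical
  by_contra huv
  have hle := Finset.sum_le_sum_of_subset (f := M.inc e) (s := {u, v}) (t := Sᶜ) <| by
    intro x
    simp only [Finset.mem_insert, Finset.mem_singleton, Finset.mem_compl]
    rintro (rfl | rfl) <;> assumption
  rw [Finset.sum_pair huv] at hle
  have htotal := Finset.sum_add_sum_compl S (M.inc e)
  rw [M.degSum] at htotal
  omega

variable (S : Finset V)

noncomputable def compVerts (c : (M.graph.induce (S : Set V)ᶜ).ConnectedComponent) :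
    Finset V :=
  (Set.toFinite c.supp).toFinset.map (Function.Embedding.subtype _)

section Components

variable {M S} {c c' : (M.graph.induce (S : Set V)ᶜ).ConnectedComponent}

theorem mem_compVerts {v : V} :
    v ∈ M.compVerts S c ↔ ∃ h : v ∉ S, (M.graph.induce _).connectedComponentMk ⟨v, h⟩ = c := by
  simp [compVerts, SimpleGraph.ConnectedComponent.mem_supp_iff]

theorem card_compVerts : (M.compVerts S c).card = Nat.card c.supp := by
  rw [compVerts, Finset.card_map, Nat.card_coe_set_eq, Set.ncard_eq_toFinset_card]

theorem disjoint_compVerts : Disjoint (M.compVerts S c) S :=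
  Finset.disjoint_left.2 fun _ hv => (mem_compVerts.1 hv).1

theorem mem_compVerts_of_adj {u v : V} (hu : u ∉ S) (hv : v ∈ M.compVerts S c)
    (hadj : M.graph.Adj u v) : u ∈ M.compVerts S c := by
  obtain ⟨hvS, rfl⟩ := mem_compVerts.1 hv
  exact mem_compVerts.2 ⟨hu, SimpleGraph.ConnectedComponent.connectedComponentMk_eq_of_adj
    (G := M.graph.induce (S : Set V)ᶜ) (v := ⟨u, hu⟩) (w := ⟨v, hvS⟩) hadj⟩

theorem eq_of_mem_compVerts {v : V} (hc : v ∈ M.compVerts S c) (hc' : v ∈ M.compVerts S c') :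
    c = c' := by
  obtain ⟨_, rfl⟩ := mem_compVerts.1 hc
  obtain ⟨_, rfl⟩ := mem_compVerts.1 hc'
  rfl

theorem exists_edge_joining_of_odd_card (F : Finset E) (hodd : ∀ v ∉ S, Odd (M.deg F v))
    (hc : Odd (Nat.card c.supp)) :
    ∃ e ∈ F, ∑ v ∈ S, M.inc e v = 1 ∧ ∃ v ∈ M.compVerts S c, 0 < M.inc e v := by
  have hsum : Odd (∑ v ∈ M.compVerts S c, M.deg F v) := by
    rwa [Finset.odd_sum_iff_odd_card_odd,
      Finset.filter_true_of_mem fun v hv => hodd v (mem_compVerts.1 hv).1, card_compVerts]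
  obtain ⟨e, heF, he⟩ := M.exists_odd_sum_inc_of_odd_sum_deg hsum
  obtain ⟨v, hv, hv0⟩ := Finset.exists_ne_zero_of_sum_ne_zero he.pos.ne'
  exact ⟨e, heF, M.sum_inc_eq_one_of_odd_sum_inc disjoint_compVerts
    (fun _ hu _ hv => mem_compVerts_of_adj hu hv) he, v, hv, Nat.pos_of_ne_zero hv0⟩

end Components

open Finset in
theorem oddComp_le_sum_deg (F : Finset E) (hodd : ∀ v ∉ S, Odd (M.deg F v)) :
    M.oddComp S ≤ ∑ v ∈ S, M.deg F v := by
  classical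
  calc M.oddComp S
        = #{c : (M.graph.induce (S : Set V)ᶜ).ConnectedComponent | Odd (Nat.card c.supp)} := by
        rw [oddComp, Nat.card_eq_fintype_card, Fintype.card_subtype]
    _ ≤ #{e ∈ F | ∑ v ∈ S, M.inc e v = 1} := by
        refine card_le_card_of_forall_subsingleton
          (fun c e => ∃ v ∈ M.compVerts S c, 0 < M.inc e v) (fun c hc => ?_) fun e he => ?_
        · obtain ⟨e, heF, heS, hv⟩ := exists_edge_joining_of_odd_card F hodd (mem_filter.1 hc).2
          exact ⟨e, mem_filter.2 ⟨heF, heS⟩, hv⟩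
        · rintro c ⟨-, v, hv, hv0⟩ c' ⟨-, v', hv', hv0'⟩
          obtain rfl := M.eq_of_sum_inc_eq_one_of_inc_pos (mem_filter.1 he).2
            (disjoint_left.1 disjoint_compVerts hv) (disjoint_left.1 disjoint_compVerts hv')
            hv0 hv0'
          exact eq_of_mem_compVerts hv hv'
    _ ≤ ∑ e ∈ F, ∑ v ∈ S, M.inc e v := by
        rw [card_eq_sum_ones, sum_filter]
        exact sum_le_sum fun e _ => by split_ifs <;> omega
    _ = ∑ v ∈ S, M.deg F v := sum_comm

end Multigraph

theorem odd_of_neg_natCast_mem_Jstar {V : Type*} {f : V → ℕ} {v : V} (hf : 0 < f v) {n : ℕ}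
    (h : -(n : ℤ) ∈ Jstar f v) : Odd n := by
  rcases h with ⟨hodd, -⟩ | ⟨-, _, -⟩ | ⟨-, _⟩
  · exact Int.odd_coe_nat n |>.1 (odd_neg.1 hodd)
  · omega
  · omega

theorem le_of_natCast_mem_Jstar {V : Type*} {f : V → ℕ} {v : V} {n : ℕ}
    (h : (n : ℤ) ∈ Jstar f v) : n ≤ f v := by
  rcases h with ⟨-, h⟩ | ⟨-, -, h⟩ | ⟨-, h⟩ <;> omega

theorem no_colored_Jstar_factor_general {V E : Type*} [Fintype V]
    (M : Multigraph V E)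
    (f : V → ℕ) (hf : ∀ v, 0 < f v) (S : Finset V)
    (hS : (∑ v ∈ S, f v) + 1 ≤ M.oddComp ↑S)
    (w : E → V → ℤ) (hw : M.IsColoring w)
    (hcol : ∀ e v, 0 < M.inc e v → ((v ∈ S → 0 < w e v) ∧ (v ∉ S → w e v < 0))) :
    ¬ ∃ F : Finset E, ∀ v, Multigraph.cdeg w F v ∈ Jstar f v := by
  rintro ⟨F, hF⟩
  have hodd : ∀ v ∉ S, Odd (M.deg F v) := fun v hv =>
    odd_of_neg_natCast_mem_Jstar (hf v)
      (Multigraph.cdeg_eq_neg_deg_of_notMem hw hcol F hv ▸ hF v)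
  have hle : ∀ v ∈ S, M.deg F v ≤ f v := fun v hv =>
    le_of_natCast_mem_Jstar (Multigraph.cdeg_eq_deg_of_mem hw hcol F hv ▸ hF v)
  have hcount := M.oddComp_le_sum_deg S F hodd
  have hsum := Finset.sum_le_sum hle
  omega

/-- Necessity construction: if `o(G - S) ≥ f(S) + 1` and each end is colored red iff
its incident vertex lies in `S`, then the connected multigraph `G` has no spanning
subgraph `F` with `Φ_F(v) ∈ J_f*(v)` for all `v`. -/
theorem no_colored_Jstar_factor {V E : Type*} [Fintype V] [Fintype E]
    (M : Multigraph V E) (hconn : M.graph.Connected)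
    (f : V → ℕ) (hf : ∀ v, 0 < f v) (S : Finset V)
    (hS : (∑ v ∈ S, f v) + 1 ≤ M.oddComp ↑S)
    (w : E → V → ℤ) (hw : M.IsColoring w)
    (hcol : ∀ e v, 0 < M.inc e v → ((v ∈ S → 0 < w e v) ∧ (v ∉ S → w e v < 0))) :
    ¬ ∃ F : Finset E, ∀ v, Multigraph.cdeg w F v ∈ Jstar f v :=
  no_colored_Jstar_factor_general M f hf S hS w hw hcol
end

section
/- Let G be a finite multigraph with a 2-end-coloring in which every end incident to a vertex outside S is colored green, and let C be a connected component of G − S of odd order. If F is a subgraph with no edge of F joining C to the rest of the graph, then some vertex v of C has Φ_F(v) equal to a nonpositive even integer; in particular Φ_F(v) ∉ J_f*(v) for any f : V(G) → ℤ⁺. -/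
/-! The ends at vertices of `C` are all green, so an edge of `F` meeting `C` lies inside `C`
and contributes exactly `-2` to `∑_{v ∈ C} Φ_F(v)`; hence this sum is even. As `|C|` is odd,
some `Φ_F(v)` with `v ∈ C` is even, and it is `≤ 0` because every end at `v` is green.
Nonpositive even integers lie in no `J_f*(v)` when `f v > 0`. -/

theorem Finset.exists_even_of_even_sum_of_odd_card {ι : Type*} {s : Finset ι} {f : ι → ℤ}
    (hsum : Even (∑ i ∈ s, f i)) (hcard : Odd s.card) : ∃ i ∈ s, Even (f i) := by
  by_contra! hodd
  have hmod : (∑ i ∈ s, f i) % 2 = 1 := by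
    rw [Finset.sum_int_mod, Finset.sum_congr rfl fun i hi =>
      Int.odd_iff.mp (Int.not_even_iff_odd.mp (hodd i hi)), Finset.sum_const, nsmul_one]
    exact_mod_cast Nat.odd_iff.mp hcard
  exact Int.not_even_iff_odd.mpr (Int.odd_iff.mpr hmod) hsum

theorem notMem_Jstar_of_even_of_nonpos {V : Type*} {f : V → ℕ} {v : V} {k : ℤ}
    (hf : 0 < f v) (heven : Even k) (hk : k ≤ 0) : k ∉ Jstar f v := by
  rintro (⟨hodd, -⟩ | ⟨hodd, -⟩ | ⟨-, rfl⟩)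
  · exact Int.not_even_iff_odd.mpr hodd heven
  · exact Int.not_even_iff_odd.mpr hodd heven
  · omega

namespace Multigraph

variable {V E : Type*} [Fintype V] {M : Multigraph V E} {w : E → V → ℤ}

theorem IsColoring.eq_zero_of_inc_eq_zero (hw : M.IsColoring w) {e : E} {v : V}
    (h : M.inc e v = 0) : w e v = 0 :=
  Int.natAbs_eq_zero.mp ((hw e v).trans h)

theorem IsColoring.eq_neg_inc (hw : M.IsColoring w) {e : E} {v : V}
    (hgreen : 0 < M.inc e v → w e v < 0) : w e v = -M.inc e v := by
  rcases (M.inc e v).eq_zero_or_pos with h | h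
  · simp [hw.eq_zero_of_inc_eq_zero h, h]
  · have := hw e v
    have := hgreen h
    omega

theorem sum_inc_eq_two (M : Multigraph V E) {s : Finset V} {e : E}
    (h : ∀ v ∉ s, M.inc e v = 0) : ∑ v ∈ s, M.inc e v = 2 := by
  rw [Finset.sum_subset (Finset.subset_univ s) fun v _ hv => h v hv, M.degSum]

theorem IsColoring.even_sum_of_not_crossing (hw : M.IsColoring w) {s : Finset V} {e : E}
    (hgreen : ∀ v ∈ s, 0 < M.inc e v → w e v < 0)
    (hsep : ¬((∃ x ∈ s, 0 < M.inc e x) ∧ ∃ y ∉ s, 0 < M.inc e y)) :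
    Even (∑ v ∈ s, w e v) := by
  by_cases hmeets : ∃ x ∈ s, 0 < M.inc e x
  · have hinside : ∀ y ∉ s, M.inc e y = 0 := by
      intro y hy
      by_contra hpos
      exact hsep ⟨hmeets, y, hy, Nat.pos_of_ne_zero hpos⟩
    have hsum : ∑ v ∈ s, w e v = -2 := by
      rw [Finset.sum_congr rfl fun v hv => hw.eq_neg_inc (hgreen v hv), Finset.sum_neg_distrib,
        ← Nat.cast_sum, M.sum_inc_eq_two hinside]
      rfl
    rw [hsum]
    decide
  · push Not at hmeets
    rw [Finset.sum_eq_zero fun v hv => hw.eq_zero_of_inc_eq_zero (by have := hmeets v hv; omega)]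
    exact Even.zero

theorem IsColoring.even_sum_cdeg (hw : M.IsColoring w) {s : Finset V} {F : Finset E}
    (hgreen : ∀ e, ∀ v ∈ s, 0 < M.inc e v → w e v < 0)
    (hsep : ∀ e ∈ F, ¬((∃ x ∈ s, 0 < M.inc e x) ∧ ∃ y ∉ s, 0 < M.inc e y)) :
    Even (∑ v ∈ s, cdeg w F v) := by
  simp only [cdeg]
  rw [Finset.sum_comm]
  exact Finset.even_sum _ fun e he => hw.even_sum_of_not_crossing (hgreen e) (hsep e he)

theorem IsColoring.cdeg_nonpos (hw : M.IsColoring w) {F : Finset E} {v : V}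
    (hgreen : ∀ e, 0 < M.inc e v → w e v < 0) : cdeg w F v ≤ 0 :=
  Finset.sum_nonpos fun e _ => (hw.eq_neg_inc (hgreen e)).trans_le (by omega)

end Multigraph

theorem odd_component_has_even_nonpos_vertex_general {V E : Type*} [Fintype V]
    (M : Multigraph V E) (w : E → V → ℤ) (hw : M.IsColoring w)
    (S : Finset V)
    (hcol : ∀ e v, v ∉ S → 0 < M.inc e v → w e v < 0)
    (c : (M.graph.induce ((↑S : Set V)ᶜ)).ConnectedComponent)
    (hodd : Odd (Nat.card c.supp))
    (F : Finset E)
    (hsep : ∀ e ∈ F, ¬((∃ x ∈ Subtype.val '' c.supp, 0 < M.inc e x) ∧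
        ∃ y ∉ Subtype.val '' c.supp, 0 < M.inc e y)) :
    ∃ v ∈ Subtype.val '' c.supp, Multigraph.cdeg w F v ≤ 0 ∧
      Even (Multigraph.cdeg w F v) ∧
      ∀ f : V → ℕ, (∀ u, 0 < f u) → Multigraph.cdeg w F v ∉ Jstar f v := by
  classical
  set C : Finset V := (Subtype.val '' c.supp).toFinset
  have hmemC : ∀ v, v ∈ C ↔ v ∈ Subtype.val '' c.supp := fun v => Set.mem_toFinset
  have hgreen : ∀ e, ∀ v ∈ C, 0 < M.inc e v → w e v < 0 := by
    intro e v hv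
    obtain ⟨⟨u, hu⟩, -, rfl⟩ := (hmemC v).mp hv
    exact hcol e u (by simpa using hu)
  have hcard : Odd C.card := by
    rwa [← Set.ncard_eq_toFinset_card', Set.ncard_image_of_injective _ Subtype.val_injective,
      ← Nat.card_coe_set_eq]
  have hsum : Even (∑ v ∈ C, Multigraph.cdeg w F v) :=
    hw.even_sum_cdeg hgreen fun e he => by simpa only [hmemC] using hsep e he
  obtain ⟨v, hv, heven⟩ := Finset.exists_even_of_even_sum_of_odd_card hsum hcard
  have hnonpos := hw.cdeg_nonpos (F := F) fun e => hgreen e v hv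
  exact ⟨v, (hmemC v).mp hv, hnonpos, heven,
    fun f hf => notMem_Jstar_of_even_of_nonpos (hf v) heven hnonpos⟩

/-- If all ends incident to vertices outside `S` are green, `C` is an odd-order
connected component of `G - S`, and no edge of the subgraph `F` joins `C` to the rest
of the graph, then some vertex of `C` has nonpositive even colored degree in `F`;
in particular its colored degree lies in no `J_f*`. -/
theorem odd_component_has_even_nonpos_vertex {V E : Type*} [Fintype V] [Fintype E]
    (M : Multigraph V E) (w : E → V → ℤ) (hw : M.IsColoring w)
    (S : Finset V)
    (hcol : ∀ e v, v ∉ S → 0 < M.inc e v → w e v < 0)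
    (c : (M.graph.induce ((↑S : Set V)ᶜ)).ConnectedComponent)
    (hodd : Odd (Nat.card c.supp))
    (F : Finset E)
    (hsep : ∀ e ∈ F, ¬((∃ x ∈ Subtype.val '' c.supp, 0 < M.inc e x) ∧
        ∃ y ∉ Subtype.val '' c.supp, 0 < M.inc e y)) :
    ∃ v ∈ Subtype.val '' c.supp, Multigraph.cdeg w F v ≤ 0 ∧
      Even (Multigraph.cdeg w F v) ∧
      ∀ f : V → ℕ, (∀ u, 0 < f u) → Multigraph.cdeg w F v ∉ Jstar f v :=
  odd_component_has_even_nonpos_vertex_general M w hw S hcol c hodd F hsep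
end

section
/- Let I be an allowed set of integers (every gap between consecutive elements is at most 2), f a positive even integer, and J* = {…,−5,−3,−1,1,3,…,f−1,f}. Suppose min I ≤ f − 1, and suppose I and J* satisfy: (i) if u−1, u+1 ∈ I and u ∉ I then u ∈ J* and u±1 ∉ J*; (ii) neither [I] ∩ J* nor [I] \ J* contains two consecutive integers, where [I] is the integer interval from min I to max I. Then max I ≤ f − 1. -/
/-! When `f` is even, both `f - 1` and `f` lie in `J*`. If `max I ≥ f`, then together with
`min I ≤ f - 1` both lie in `[I]`, so `[I] ∩ J*` contains two consecutive integers,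
contradicting (ii). -/

/-- `J* = {…, -5, -3, -1, 1, 3, …}` up to `f`, together with `f` itself when `f` is
even: all negative odd integers, all positive odd integers at most `f`, and `f` if
`f` is even. -/
def JstarInt (f : ℤ) : Set ℤ :=
  {k | (Odd k ∧ k < 0) ∨ (Odd k ∧ 0 < k ∧ k ≤ f) ∨ (Even f ∧ k = f)}

theorem odd_mem_JstarInt {f k : ℤ} (hk : Odd k) (hkf : k ≤ f) : k ∈ JstarInt f := by
  rcases lt_trichotomy k 0 with hneg | rfl | hpos
  · exact Or.inl ⟨hk, hneg⟩
  · simp at hk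
  · exact Or.inr (Or.inl ⟨hk, hpos, hkf⟩)

theorem self_mem_JstarInt {f : ℤ} (hf : Even f) : f ∈ JstarInt f :=
  Or.inr (Or.inr ⟨hf, rfl⟩)

theorem case_f_even_general (I : Finset ℤ) (hne : I.Nonempty)
    (f : ℤ) (hfe : Even f)
    (hmin : I.min' hne ≤ f - 1)
    (hii : ∀ u : ℤ,
      ¬(u ∈ Set.Icc (I.min' hne) (I.max' hne) ∩ JstarInt f ∧
        u + 1 ∈ Set.Icc (I.min' hne) (I.max' hne) ∩ JstarInt f) ∧
      ¬(u ∈ Set.Icc (I.min' hne) (I.max' hne) \ JstarInt f ∧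
        u + 1 ∈ Set.Icc (I.min' hne) (I.max' hne) \ JstarInt f)) :
    I.max' hne ≤ f - 1 := by
  by_contra! hmax
  have hodd : Odd (f - 1) := hfe.sub_odd odd_one
  exact (hii (f - 1)).1
    ⟨⟨⟨hmin, by omega⟩, odd_mem_JstarInt hodd (by omega)⟩,
     ⟨⟨by omega, by omega⟩, by simpa using self_mem_JstarInt hfe⟩⟩

/-- Case 1 (`f` even) of the proof of the main theorem: if `I` is an allowed set with
`min I ≤ f - 1` satisfying Lovász's structural conditions (i) and (ii) with respect to
`J* = {…,-5,-3,-1,1,3,…,f-1,f}`, then `max I ≤ f - 1`. -/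
theorem case_f_even (I : Finset ℤ) (hne : I.Nonempty)
    (hallowed : ∀ a ∈ I, ∀ b ∈ I, a < b → (∀ c ∈ I, ¬(a < c ∧ c < b)) → b - a ≤ 2)
    (f : ℤ) (hf : 0 < f) (hfe : Even f)
    (hmin : I.min' hne ≤ f - 1)
    (hi : ∀ u : ℤ, u - 1 ∈ I → u + 1 ∈ I → u ∉ I →
      u ∈ JstarInt f ∧ u + 1 ∉ JstarInt f ∧ u - 1 ∉ JstarInt f)
    (hii : ∀ u : ℤ,
      ¬(u ∈ Set.Icc (I.min' hne) (I.max' hne) ∩ JstarInt f ∧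
        u + 1 ∈ Set.Icc (I.min' hne) (I.max' hne) ∩ JstarInt f) ∧
      ¬(u ∈ Set.Icc (I.min' hne) (I.max' hne) \ JstarInt f ∧
        u + 1 ∈ Set.Icc (I.min' hne) (I.max' hne) \ JstarInt f)) :
    I.max' hne ≤ f - 1 :=
  case_f_even_general I hne f hfe hmin hii
end

section
/- Let G be a finite multigraph with a 2-end-coloring, f : V(G) → ℤ⁺, and let F be a spanning subgraph with Φ_F(v) ∈ J_f*(v) for every vertex v. Suppose every end at a vertex of S is red and every other end is green, for some vertex subset S. If every odd-order component C of G − S has an F-edge joining C to S, then o(G − S) ≤ f(S). -/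
/-!
Every odd component of `G - S` is joined to `S` by an edge of `F`. Such an edge has an end in `S`
and only two ends, so its other end is its only one outside `S`: distinct components get distinct
edges, and `o(G - S)` is at most the number of `F`-edges between `S` and its complement. Each of
these has exactly one end in `S`, and every end at a vertex of `S` is red, so their number is at
most `∑_{s ∈ S} Φ_F(s)`, which is at most `f(S)` because `max J_f*(v) = f(v)`.
-/

lemma le_of_mem_Jstar {V : Type*} {f : V → ℕ} {v : V} {k : ℤ} (hk : k ∈ Jstar f v) :
    k ≤ f v := by
  rcases hk with ⟨-, hneg⟩ | ⟨-, -, hle⟩ | ⟨-, rfl⟩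
  · exact hneg.le.trans (Int.natCast_nonneg _)
  · exact hle
  · exact le_rfl

namespace Multigraph

variable {V E : Type*} [Fintype V] (M : Multigraph V E)

lemma inc_add_sum_inc_le_two (e : E) {x : V} {S : Finset V} (hx : x ∉ S) :
    M.inc e x + ∑ v ∈ S, M.inc e v ≤ 2 := by
  classical
  rw [← Finset.sum_insert hx, ← M.degSum e]
  exact Finset.sum_le_sum_of_subset (Finset.subset_univ _)

lemma IsColoring.eq_inc_of_red {M : Multigraph V E} {w : E → V → ℤ} (hw : M.IsColoring w)
    {e : E} {v : V} (hred : 0 < M.inc e v → 0 < w e v) : w e v = M.inc e v := by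
  rw [← hw e v]
  rcases Nat.eq_zero_or_pos (M.inc e v) with h | h
  · rw [← hw e v, Int.natAbs_eq_zero] at h
    simp [h]
  · exact (Int.natAbs_of_nonneg (hred h).le).symm

def IsCrossing (S : Finset V) (e : E) : Prop :=
  (∃ s ∈ S, 0 < M.inc e s) ∧ ∃ x ∉ S, 0 < M.inc e x

open Classical in
noncomputable def crossing (S : Finset V) (F : Finset E) : Finset E :=
  {e ∈ F | M.IsCrossing S e}

open Classical in
lemma mem_crossing {S : Finset V} {F : Finset E} {e : E} :
    e ∈ M.crossing S F ↔ e ∈ F ∧ M.IsCrossing S e :=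
  Finset.mem_filter

variable {M}

lemma IsCrossing.one_le_sum_inc {S : Finset V} {e : E} (he : M.IsCrossing S e) :
    1 ≤ ∑ s ∈ S, M.inc e s := by
  obtain ⟨⟨s, hs, hpos⟩, -⟩ := he
  exact hpos.trans_le (Finset.single_le_sum (fun _ _ => Nat.zero_le _) hs)

lemma IsCrossing.sum_inc_eq_one {S : Finset V} {e : E} (he : M.IsCrossing S e) :
    ∑ s ∈ S, M.inc e s = 1 := by
  obtain ⟨x, hx, hpos⟩ := he.2
  have := M.inc_add_sum_inc_le_two e hx
  have := he.one_le_sum_inc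
  omega

lemma IsCrossing.eq_of_inc_pos {S : Finset V} {e : E} (he : M.IsCrossing S e) {x y : V}
    (hx : x ∉ S) (hy : y ∉ S) (hxe : 0 < M.inc e x) (hye : 0 < M.inc e y) : x = y := by
  classical
  by_contra hxy
  have hx' : x ∉ insert y S := by simp [hxy, hx]
  have := M.inc_add_sum_inc_le_two e hx'
  rw [Finset.sum_insert hy] at this
  have := he.one_le_sum_inc
  omega

lemma card_crossing_le_sum_cdeg {w : E → V → ℤ} {S : Finset V}
    (hred : ∀ s ∈ S, ∀ e, w e s = M.inc e s) (F : Finset E) :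
    ((M.crossing S F).card : ℤ) ≤ ∑ s ∈ S, cdeg w F s := by
  calc ((M.crossing S F).card : ℤ)
      = ∑ e ∈ M.crossing S F, ∑ s ∈ S, (M.inc e s : ℤ) := by
        rw [Finset.card_eq_sum_ones]
        push_cast
        refine Finset.sum_congr rfl fun e he => ?_
        exact_mod_cast (M.mem_crossing.mp he).2.sum_inc_eq_one.symm
    _ = ∑ s ∈ S, ∑ e ∈ M.crossing S F, w e s := by
        rw [Finset.sum_comm]
        exact Finset.sum_congr rfl fun s hs =>
          Finset.sum_congr rfl fun e _ => (hred s hs e).symm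
    _ ≤ ∑ s ∈ S, cdeg w F s := by
        refine Finset.sum_le_sum fun s hs => ?_
        refine Finset.sum_le_sum_of_subset_of_nonneg (fun e he => (M.mem_crossing.mp he).1)
          fun e _ _ => ?_
        rw [hred s hs e]
        exact Int.natCast_nonneg _

lemma oddComp_le_card_crossing {S : Finset V} {F : Finset E}
    (hjoin : ∀ c : (M.graph.induce ((↑S : Set V)ᶜ)).ConnectedComponent,
      Odd (Nat.card c.supp) →
        ∃ e ∈ F, (∃ s ∈ S, 0 < M.inc e s) ∧
          ∃ x ∈ Subtype.val '' c.supp, 0 < M.inc e x) :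
    M.oddComp ↑S ≤ (M.crossing S F).card := by
  have hedge : ∀ c : {c : (M.graph.induce ((↑S : Set V)ᶜ)).ConnectedComponent //
      Odd (Nat.card c.supp)}, ∃ e ∈ M.crossing S F, ∃ y ∈ c.1.supp, 0 < M.inc e y := by
    rintro ⟨c, hc⟩
    obtain ⟨e, heF, hs, _, ⟨y, hy, rfl⟩, hye⟩ := hjoin c hc
    exact ⟨e, M.mem_crossing.mpr ⟨heF, hs, y, y.2, hye⟩, y, hy, hye⟩
  choose g hgT hg using hedge
  have hinj : Function.Injective fun c => (⟨g c, hgT c⟩ : M.crossing S F) := by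
    intro c₁ c₂ hc
    obtain ⟨y₁, hy₁, hpos₁⟩ := hg c₁
    obtain ⟨y₂, hy₂, hpos₂⟩ := hg c₂
    have he : g c₁ = g c₂ := congrArg Subtype.val hc
    rw [he] at hpos₁
    have hy : y₁ = y₂ := Subtype.ext <|
      (M.mem_crossing.mp (hgT c₂)).2.eq_of_inc_pos y₁.2 y₂.2 hpos₁ hpos₂
    rw [SimpleGraph.ConnectedComponent.mem_supp_iff] at hy₁ hy₂
    exact Subtype.ext (hy₁.symm.trans (hy ▸ hy₂))
  simpa [oddComp] using Nat.card_le_card_of_injective _ hinj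

end Multigraph

theorem odd_comp_le_of_factor_general {V E : Type*} [Fintype V]
    (M : Multigraph V E) (w : E → V → ℤ) (hw : M.IsColoring w)
    (f : V → ℕ) (S : Finset V)
    (hcol : ∀ e v, 0 < M.inc e v → ((v ∈ S → 0 < w e v) ∧ (v ∉ S → w e v < 0)))
    (F : Finset E) (hF : ∀ v, Multigraph.cdeg w F v ∈ Jstar f v)
    (hdry : ∀ c : (M.graph.induce ((↑S : Set V)ᶜ)).ConnectedComponent,
      Odd (Nat.card c.supp) →
        ∃ e ∈ F, (∃ s ∈ S, 0 < M.inc e s) ∧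
          ∃ x ∈ Subtype.val '' c.supp, 0 < M.inc e x) :
    M.oddComp ↑S ≤ ∑ v ∈ S, f v := by
  have hred : ∀ s ∈ S, ∀ e, w e s = M.inc e s := fun s hs e =>
    hw.eq_inc_of_red fun h => (hcol e s h).1 hs
  have hodd := M.oddComp_le_card_crossing hdry
  have hcard := M.card_crossing_le_sum_cdeg hred F
  have hcdeg : ∑ s ∈ S, Multigraph.cdeg w F s ≤ ∑ s ∈ S, (f s : ℤ) :=
    Finset.sum_le_sum fun s _ => le_of_mem_Jstar (hF s)
  zify
  omega

/-- If every end at a vertex of `S` is red and every other end is green, `F` is a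
colored `J_f*`-factor, and every odd-order component `C` of `G - S` is joined to `S`
by some edge of `F`, then `o(G - S) ≤ f(S)`. -/
theorem odd_comp_le_of_factor {V E : Type*} [Fintype V] [Fintype E]
    (M : Multigraph V E) (w : E → V → ℤ) (hw : M.IsColoring w)
    (f : V → ℕ) (hf : ∀ v, 0 < f v) (S : Finset V)
    (hcol : ∀ e v, 0 < M.inc e v → ((v ∈ S → 0 < w e v) ∧ (v ∉ S → w e v < 0)))
    (F : Finset E) (hF : ∀ v, Multigraph.cdeg w F v ∈ Jstar f v)
    (hdry : ∀ c : (M.graph.induce ((↑S : Set V)ᶜ)).ConnectedComponent,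
      Odd (Nat.card c.supp) →
        ∃ e ∈ F, (∃ s ∈ S, 0 < M.inc e s) ∧
          ∃ x ∈ Subtype.val '' c.supp, 0 < M.inc e x) :
    M.oddComp ↑S ≤ ∑ v ∈ S, f v :=
  odd_comp_le_of_factor_general M w hw f S hcol F hF hdry
end

section
/- Let I be an allowed set of integers, f a positive odd integer, and J* = {…,−5,−3,−1,1,3,…,f}. Suppose min I ≤ f − 1 and suppose that neither [I] ∩ J* nor [I] \ J* contains a pair of consecutive integers, where [I] is the integer interval from min I to max I. If additionally f + 2 ∉ I whenever f + 1 ∈ I (i.e., I contains no element exceeding f + 1 adjacent in [I] to an element of I \ J*), then max I ≤ f + 1. -/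
theorem notMem_JstarInt_of_lt {f k : ℤ} (hf : 0 < f) (hfo : Odd f) (hk : f < k) :
    k ∉ JstarInt f := by
  rintro (⟨-, hneg⟩ | ⟨-, -, hle⟩ | ⟨heven, -⟩)
  · omega
  · omega
  · exact Int.not_even_iff_odd.mpr hfo heven

theorem case_f_odd_general (I : Finset ℤ) (hne : I.Nonempty)
    (f : ℤ) (hf : 0 < f) (hfo : Odd f)
    (hmin : I.min' hne ≤ f - 1)
    (hii : ∀ u : ℤ,
      ¬(u ∈ Set.Icc (I.min' hne) (I.max' hne) ∩ JstarInt f ∧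
        u + 1 ∈ Set.Icc (I.min' hne) (I.max' hne) ∩ JstarInt f) ∧
      ¬(u ∈ Set.Icc (I.min' hne) (I.max' hne) \ JstarInt f ∧
        u + 1 ∈ Set.Icc (I.min' hne) (I.max' hne) \ JstarInt f)) :
    I.max' hne ≤ f + 1 := by
  by_contra! hmax
  exact (hii (f + 1)).2
    ⟨⟨⟨by omega, by omega⟩, notMem_JstarInt_of_lt hf hfo (by omega)⟩,
      ⟨⟨by omega, by omega⟩, notMem_JstarInt_of_lt hf hfo (by omega)⟩⟩

/-- Case 2 (`f` odd) of the proof of the main theorem: if `I` is an allowed set with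
`min I ≤ f - 1`, neither `[I] ∩ J*` nor `[I] \ J*` contains two consecutive integers,
and `f + 2 ∉ I` whenever `f + 1 ∈ I`, then `max I ≤ f + 1`. -/
theorem case_f_odd (I : Finset ℤ) (hne : I.Nonempty)
    (hallowed : ∀ a ∈ I, ∀ b ∈ I, a < b → (∀ c ∈ I, ¬(a < c ∧ c < b)) → b - a ≤ 2)
    (f : ℤ) (hf : 0 < f) (hfo : Odd f)
    (hmin : I.min' hne ≤ f - 1)
    (hii : ∀ u : ℤ,
      ¬(u ∈ Set.Icc (I.min' hne) (I.max' hne) ∩ JstarInt f ∧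
        u + 1 ∈ Set.Icc (I.min' hne) (I.max' hne) ∩ JstarInt f) ∧
      ¬(u ∈ Set.Icc (I.min' hne) (I.max' hne) \ JstarInt f ∧
        u + 1 ∈ Set.Icc (I.min' hne) (I.max' hne) \ JstarInt f))
    (hstep : (f + 1 : ℤ) ∈ I → (f + 2 : ℤ) ∉ I) :
    I.max' hne ≤ f + 1 :=
  case_f_odd_general I hne f hf hfo hmin hii
end
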